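/- Let 𝐱=(x₁,x₂), 𝐲=(y₁,y₂), 𝐳=(z₁,z₂) be points of the bidisk with xᵢ≠yᵢ and yᵢ≠zᵢ for i=1,2, such that 𝐲 is between 𝐱 and 𝐳, and suppose E_k(𝐱,𝐲) intersects E_l(𝐲,𝐳) for some k, l ∈ ℝ. Then there exists m ∈ ℝ such that either S_m(x₁,y₁) ∩ S_m(y₁,z₁) ≠ ∅ or S_m(y₂,x₂) ∩ S_m(z₂,y₂) ≠ ∅. -/

import Mathlib

/-!
On a preconnected space the continuous function `w ↦ d(w,x)² - 2 d(w,y)² + d(w,z)²` is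
nonnegative at `y`, so it vanishes as soon as it is nonpositive somewhere. At a common point
of `E_k(𝐱,𝐲)` and `E_l(𝐲,𝐳)` it equals `k - l` in the first coordinate and, with the roles of
`x₂` and `z₂` exchanged, `l - k` in the second; one of the two is nonpositive.
-/

open UpperHalfPlane

noncomputable section

/-- `y` is between `x` and `z` in `ℍ`: every point on the equidistant line of `(x,y)`
is strictly closer to `y` than to `z`, and every point on the equidistant line of
`(y,z)` is strictly closer to `y` than to `x` (the equidistant lines are disjoint and
`y` lies in the slab they bound). -/
def BtwH (x y z : UpperHalfPlane) : Prop :=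
  (∀ w : UpperHalfPlane, dist w x = dist w y → dist w y < dist w z) ∧
  (∀ w : UpperHalfPlane, dist w y = dist w z → dist w y < dist w x)

theorem exists_sq_dist_sub_eq_sq_dist_sub {X : Type*} [PseudoMetricSpace X] [PreconnectedSpace X]
    {x y z p : X} (hp : dist p x ^ 2 - dist p y ^ 2 ≤ dist p y ^ 2 - dist p z ^ 2) :
    ∃ w, dist w x ^ 2 - dist w y ^ 2 = dist w y ^ 2 - dist w z ^ 2 := by
  set f : X → ℝ := fun w => (dist w x ^ 2 - dist w y ^ 2) - (dist w y ^ 2 - dist w z ^ 2)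
  have hf : Continuous f := by fun_prop
  have hfp : f p ≤ 0 := sub_nonpos.2 hp
  have hfy : 0 ≤ f y := by simp only [f, dist_self]; ring_nf; positivity
  obtain ⟨w, hw⟩ := intermediate_value_univ p y hf ⟨hfp, hfy⟩
  exact ⟨w, sub_eq_zero.1 hw⟩

theorem EK_intersect_imp_squareHyperbolae_intersect
    (x₁ x₂ y₁ y₂ z₁ z₂ : UpperHalfPlane)
    (k l : ℝ)
    (hmeet : ∃ p₁ p₂ : UpperHalfPlane,
        (dist p₁ x₁ ^ 2 - dist p₁ y₁ ^ 2 = k ∧ dist p₂ y₂ ^ 2 - dist p₂ x₂ ^ 2 = k) ∧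
        (dist p₁ y₁ ^ 2 - dist p₁ z₁ ^ 2 = l ∧ dist p₂ z₂ ^ 2 - dist p₂ y₂ ^ 2 = l)) :
    ∃ m : ℝ,
      (∃ w : UpperHalfPlane,
          dist w x₁ ^ 2 - dist w y₁ ^ 2 = m ∧ dist w y₁ ^ 2 - dist w z₁ ^ 2 = m) ∨
      (∃ w : UpperHalfPlane,
          dist w y₂ ^ 2 - dist w x₂ ^ 2 = m ∧ dist w z₂ ^ 2 - dist w y₂ ^ 2 = m) := by
  obtain ⟨p₁, p₂, ⟨hk₁, hk₂⟩, hl₁, hl₂⟩ := hmeet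
  rcases le_total k l with hkl | hlk
  · obtain ⟨w, hw⟩ := exists_sq_dist_sub_eq_sq_dist_sub (p := p₁) (by rwa [hk₁, hl₁])
    exact ⟨_, Or.inl ⟨w, rfl, hw.symm⟩⟩
  · obtain ⟨w, hw⟩ :=
      exists_sq_dist_sub_eq_sq_dist_sub (x := z₂) (z := x₂) (p := p₂) (by rwa [hk₂, hl₂])
    exact ⟨_, Or.inr ⟨w, hw.symm, rfl⟩⟩
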